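/- arXiv:1309.2106 — 5 statements merged into one kernel-verified Lean document; each statement's English description precedes it below -/
import Mathlib

section
/- For all integers m₁, m₂, m₃ ≥ 0 and all real x, y, z satisfying xy + yz + zx = 1, (yz)^(m₁+1) Σ_{j≤m₂, k≤m₃} ((m₁+j+k)!/(m₁! j! k!)) y^k z^j x^(j+k) + (zx)^(m₂+1) Σ_{k≤m₃, i≤m₁} ((i+m₂+k)!/(i! m₂! k!)) z^i x^k y^(i+k) + (xy)^(m₃+1) Σ_{i≤m₁, j≤m₂} ((i+j+m₃)!/(i! j! m₃!)) x^j y^i z^(i+j) = 1. -/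
open Finset

/-- Real-valued trinomial coefficient. -/
noncomputable def Nr (i j k : ℕ) : ℝ :=
  (Nat.factorial (i + j + k)) / (Nat.factorial i * Nat.factorial j * Nat.factorial k)

lemma fact_ne (n : ℕ) : (Nat.factorial n : ℝ) ≠ 0 := by
  exact_mod_cast Nat.factorial_ne_zero n

lemma Nr_000 : Nr 0 0 0 = 1 := by simp [Nr, Nat.factorial]

lemma Nr_rot (i j k : ℕ) : Nr i j k = Nr k i j := by
  unfold Nr
  rw [show i + j + k = k + i + j by omega]
  ring

lemma pascal_00 (i : ℕ) : Nr (i+1) 0 0 = Nr i 0 0 := by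
  unfold Nr
  simp only [Nat.add_zero, Nat.factorial_zero, Nat.cast_one, mul_one]
  rw [div_self (fact_ne _), div_self (fact_ne _)]

lemma pascal_J0 (i j : ℕ) : Nr (i+1) (j+1) 0 = Nr i (j+1) 0 + Nr (i+1) j 0 := by
  unfold Nr
  have e1 : i + 1 + (j + 1) + 0 = (i + j + 1) + 1 := by omega
  have e2 : i + 1 + j + 0 = i + j + 1 := by omega
  have e3 : i + (j+1) + 0 = (i + j) + 1 := by omega
  rw [e1, e2, e3, Nat.factorial_succ (i+j+1), Nat.factorial_succ (i+j),
    Nat.factorial_succ i, Nat.factorial_succ j]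
  push_cast
  field_simp
  ring

lemma pascal_0K (i k : ℕ) : Nr (i+1) 0 (k+1) = Nr i 0 (k+1) + Nr (i+1) 0 k := by
  unfold Nr
  have e1 : i + 1 + 0 + (k + 1) = (i + k + 1) + 1 := by omega
  have e2 : i + 1 + 0 + k = i + k + 1 := by omega
  have e3 : i + 0 + (k+1) = (i + k) + 1 := by omega
  rw [e1, e2, e3, Nat.factorial_succ (i+k+1), Nat.factorial_succ (i+k),
    Nat.factorial_succ i, Nat.factorial_succ k]
  push_cast
  field_simp
  ring

lemma pascal_JK (i j k : ℕ) :
    Nr (i+1) (j+1) (k+1) = Nr i (j+1) (k+1) + Nr (i+1) j (k+1) + Nr (i+1) (j+1) k := by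
  unfold Nr
  have e1 : i + 1 + (j + 1) + (k + 1) = ((i + j + k + 1) + 1) + 1 := by omega
  have e2 : i + (j+1) + (k+1) = (i + j + k + 1) + 1 := by omega
  have e3 : i + 1 + j + (k+1) = (i + j + k + 1) + 1 := by omega
  have e4 : i + 1 + (j+1) + k = (i + j + k + 1) + 1 := by omega
  rw [e1, e2, e3, e4, Nat.factorial_succ ((i+j+k+1)+1), Nat.factorial_succ (i+j+k+1),
    Nat.factorial_succ i, Nat.factorial_succ j, Nat.factorial_succ k]
  push_cast
  field_simp
  ring

/-- Quadrant decomposition of a double sum, peeling the 0-indices. -/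
lemma expand_sum (J K : ℕ) (g : ℕ → ℕ → ℝ) :
    ∑ j ∈ range (J+1), ∑ k ∈ range (K+1), g j k
      = (∑ j ∈ range J, ∑ k ∈ range K, g (j+1) (k+1))
        + (∑ j ∈ range J, g (j+1) 0) + (∑ k ∈ range K, g 0 (k+1)) + g 0 0 := by
  simp only [Finset.sum_range_succ', Finset.sum_add_distrib]
  ring

lemma split_inner (J K : ℕ) (g : ℕ → ℕ → ℝ) :
    ∑ j ∈ range J, ∑ k ∈ range (K+1), g j k
      = (∑ j ∈ range J, ∑ k ∈ range K, g j (k+1)) + ∑ j ∈ range J, g j 0 := by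
  simp only [Finset.sum_range_succ', Finset.sum_add_distrib]

lemma split_outer (J K : ℕ) (g : ℕ → ℕ → ℝ) :
    ∑ j ∈ range (J+1), ∑ k ∈ range K, g j k
      = (∑ j ∈ range J, ∑ k ∈ range K, g (j+1) k) + ∑ k ∈ range K, g 0 k := by
  rw [Finset.sum_range_succ']

lemma peel_inner (J K : ℕ) (g : ℕ → ℕ → ℝ) :
    ∑ j ∈ range J, ∑ k ∈ range (K+1), g j k
      = (∑ j ∈ range J, ∑ k ∈ range K, g j k) + ∑ j ∈ range J, g j K := by
  simp only [Finset.sum_range_succ, Finset.sum_add_distrib]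

/-- Key Pascal recurrence for the double sums. -/
lemma key (i J K : ℕ) (b c : ℝ) :
    ∑ j ∈ range (J+1), ∑ k ∈ range (K+1), Nr (i+1) j k * b^j * c^k
      = (∑ j ∈ range (J+1), ∑ k ∈ range (K+1), Nr i j k * b^j * c^k)
        + b * ∑ j ∈ range J, ∑ k ∈ range (K+1), Nr (i+1) j k * b^j * c^k
        + c * ∑ j ∈ range (J+1), ∑ k ∈ range K, Nr (i+1) j k * b^j * c^k := by
  have h1 : ∑ j ∈ range J, ∑ k ∈ range K, Nr (i+1) (j+1) (k+1) * b^(j+1) * c^(k+1)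
      = (∑ j ∈ range J, ∑ k ∈ range K, Nr i (j+1) (k+1) * b^(j+1) * c^(k+1))
        + b * (∑ j ∈ range J, ∑ k ∈ range K, Nr (i+1) j (k+1) * b^j * c^(k+1))
        + c * (∑ j ∈ range J, ∑ k ∈ range K, Nr (i+1) (j+1) k * b^(j+1) * c^k) := by
    rw [Finset.mul_sum, Finset.mul_sum, ← Finset.sum_add_distrib, ← Finset.sum_add_distrib]
    refine Finset.sum_congr rfl fun j _ => ?_
    rw [Finset.mul_sum, Finset.mul_sum, ← Finset.sum_add_distrib, ← Finset.sum_add_distrib]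
    refine Finset.sum_congr rfl fun k _ => ?_
    rw [pascal_JK]
    ring
  have h2 : ∑ j ∈ range J, Nr (i+1) (j+1) 0 * b^(j+1) * c^0
      = (∑ j ∈ range J, Nr i (j+1) 0 * b^(j+1) * c^0)
        + b * ∑ j ∈ range J, Nr (i+1) j 0 * b^j * c^0 := by
    rw [Finset.mul_sum, ← Finset.sum_add_distrib]
    refine Finset.sum_congr rfl fun j _ => ?_
    rw [pascal_J0]
    ring
  have h3 : ∑ k ∈ range K, Nr (i+1) 0 (k+1) * b^0 * c^(k+1)
      = (∑ k ∈ range K, Nr i 0 (k+1) * b^0 * c^(k+1))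
        + c * ∑ k ∈ range K, Nr (i+1) 0 k * b^0 * c^k := by
    rw [Finset.mul_sum, ← Finset.sum_add_distrib]
    refine Finset.sum_congr rfl fun k _ => ?_
    rw [pascal_0K]
    ring
  have h4 : Nr (i+1) 0 0 * b^0 * c^0 = Nr i 0 0 * b^0 * c^0 := by rw [pascal_00]
  rw [expand_sum J K (fun j k => Nr (i+1) j k * b^j * c^k),
    expand_sum J K (fun j k => Nr i j k * b^j * c^k),
    split_inner J K (fun j k => Nr (i+1) j k * b^j * c^k),
    split_outer J K (fun j k => Nr (i+1) j k * b^j * c^k)]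
  linear_combination h1 + h2 + h3 + h4

noncomputable def fF (a b c : ℝ) (m₁ m₂ m₃ : ℕ) : ℝ :=
  a^(m₁+1) * ∑ j ∈ range (m₂+1), ∑ k ∈ range (m₃+1), Nr m₁ j k * b^j * c^k

lemma step (a b c : ℝ) (h : a + b + c = 1) (m₁ m₂ m₃ : ℕ) :
    fF a b c (m₁+1) m₂ m₃ + fF b c a m₂ m₃ (m₁+1) + fF c a b m₃ (m₁+1) m₂
      = fF a b c m₁ m₂ m₃ + fF b c a m₂ m₃ m₁ + fF c a b m₃ m₁ m₂ := by
  unfold fF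
  have hb : ∑ j ∈ range (m₃+1), ∑ k ∈ range (m₁+1+1), Nr m₂ j k * c^j * a^k
      = (∑ j ∈ range (m₃+1), ∑ k ∈ range (m₁+1), Nr m₂ j k * c^j * a^k)
        + ∑ j ∈ range (m₃+1), Nr m₂ j (m₁+1) * c^j * a^(m₁+1) :=
    peel_inner (m₃+1) (m₁+1) _
  have hc : ∑ j ∈ range (m₁+1+1), ∑ k ∈ range (m₂+1), Nr m₃ j k * a^j * b^k
      = (∑ j ∈ range (m₁+1), ∑ k ∈ range (m₂+1), Nr m₃ j k * a^j * b^k)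
        + ∑ k ∈ range (m₂+1), Nr m₃ (m₁+1) k * a^(m₁+1) * b^k :=
    Finset.sum_range_succ _ (m₁+1)
  have hE : ∑ j ∈ range (m₂+1), ∑ k ∈ range (m₃+1), Nr (m₁+1) j k * b^j * c^k
      = (∑ j ∈ range m₂, ∑ k ∈ range (m₃+1), Nr (m₁+1) j k * b^j * c^k)
        + ∑ k ∈ range (m₃+1), Nr (m₁+1) m₂ k * b^m₂ * c^k :=
    Finset.sum_range_succ _ m₂
  have hF : ∑ j ∈ range (m₂+1), ∑ k ∈ range (m₃+1), Nr (m₁+1) j k * b^j * c^k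
      = (∑ j ∈ range (m₂+1), ∑ k ∈ range m₃, Nr (m₁+1) j k * b^j * c^k)
        + ∑ j ∈ range (m₂+1), Nr (m₁+1) j m₃ * b^j * c^m₃ :=
    peel_inner (m₂+1) m₃ _
  have hU : b^(m₂+1) * (∑ j ∈ range (m₃+1), Nr m₂ j (m₁+1) * c^j * a^(m₁+1))
      = a^(m₁+1) * b * ∑ k ∈ range (m₃+1), Nr (m₁+1) m₂ k * b^m₂ * c^k := by
    rw [Finset.mul_sum, Finset.mul_sum]
    refine Finset.sum_congr rfl fun k _ => ?_
    rw [show Nr m₂ k (m₁+1) = Nr (m₁+1) m₂ k from Nr_rot m₂ k (m₁+1)]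
    ring
  have hW : c^(m₃+1) * (∑ k ∈ range (m₂+1), Nr m₃ (m₁+1) k * a^(m₁+1) * b^k)
      = a^(m₁+1) * c * ∑ j ∈ range (m₂+1), Nr (m₁+1) j m₃ * b^j * c^m₃ := by
    rw [Finset.mul_sum, Finset.mul_sum]
    refine Finset.sum_congr rfl fun j _ => ?_
    rw [show Nr m₃ (m₁+1) j = Nr (m₁+1) j m₃ by rw [Nr_rot m₃ (m₁+1) j, Nr_rot j m₃ (m₁+1)]]
    ring
  have hk := key m₁ m₂ m₃ b c
  rw [hb, hc]
  linear_combination (a^(m₁+1)) * hk + hU + hW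
    - (a^(m₁+1)*b) * hE - (a^(m₁+1)*c) * hF
    + (a^(m₁+1) * (∑ j ∈ range (m₂+1), ∑ k ∈ range (m₃+1), Nr (m₁+1) j k * b^j * c^k)) * h

lemma G_one (a b c : ℝ) (h : a + b + c = 1) (m₁ m₂ m₃ : ℕ) :
    fF a b c m₁ m₂ m₃ + fF b c a m₂ m₃ m₁ + fF c a b m₃ m₁ m₂ = 1 := by
  induction m₁ with
  | succ n ih => rw [step a b c h n m₂ m₃]; exact ih
  | zero =>
    induction m₂ with
    | succ n ih =>
      have hs := step b c a (by linarith) n m₃ 0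
      linarith [hs, ih]
    | zero =>
      induction m₃ with
      | succ p ih =>
        have hs := step c a b (by linarith) p 0 0
        linarith [hs, ih]
      | zero =>
        simp [fF, Nr_000]
        linarith

theorem three_var_chaundy_bullard (m₁ m₂ m₃ : ℕ) (x y z : ℝ)
    (h : x * y + y * z + z * x = 1) :
    (y * z) ^ (m₁ + 1) *
      (∑ j ∈ Finset.range (m₂ + 1), ∑ k ∈ Finset.range (m₃ + 1),
        ((Nat.factorial (m₁ + j + k) : ℝ) /
          (Nat.factorial m₁ * Nat.factorial j * Nat.factorial k)) *
          y ^ k * z ^ j * x ^ (j + k))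
    + (z * x) ^ (m₂ + 1) *
      (∑ k ∈ Finset.range (m₃ + 1), ∑ i ∈ Finset.range (m₁ + 1),
        ((Nat.factorial (i + m₂ + k) : ℝ) /
          (Nat.factorial i * Nat.factorial m₂ * Nat.factorial k)) *
          z ^ i * x ^ k * y ^ (i + k))
    + (x * y) ^ (m₃ + 1) *
      (∑ i ∈ Finset.range (m₁ + 1), ∑ j ∈ Finset.range (m₂ + 1),
        ((Nat.factorial (i + j + m₃) : ℝ) /
          (Nat.factorial i * Nat.factorial j * Nat.factorial m₃)) *
          x ^ j * y ^ i * z ^ (i + j))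
    = 1 := by
  have key := G_one (y*z) (z*x) (x*y) (by linarith) m₁ m₂ m₃
  unfold fF at key
  rw [show (∑ j ∈ Finset.range (m₂ + 1), ∑ k ∈ Finset.range (m₃ + 1),
        ((Nat.factorial (m₁ + j + k) : ℝ) /
          (Nat.factorial m₁ * Nat.factorial j * Nat.factorial k)) *
          y ^ k * z ^ j * x ^ (j + k))
      = ∑ j ∈ range (m₂+1), ∑ k ∈ range (m₃+1), Nr m₁ j k * (z*x)^j * (x*y)^k from
    Finset.sum_congr rfl fun j _ => Finset.sum_congr rfl fun k _ => by
      unfold Nr; ring]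
  rw [show (∑ k ∈ Finset.range (m₃ + 1), ∑ i ∈ Finset.range (m₁ + 1),
        ((Nat.factorial (i + m₂ + k) : ℝ) /
          (Nat.factorial i * Nat.factorial m₂ * Nat.factorial k)) *
          z ^ i * x ^ k * y ^ (i + k))
      = ∑ j ∈ range (m₃+1), ∑ k ∈ range (m₁+1), Nr m₂ j k * (x*y)^j * (y*z)^k from
    Finset.sum_congr rfl fun j _ => Finset.sum_congr rfl fun k _ => by
      rw [show k + m₂ + j = m₂ + j + k by omega]
      unfold Nr; ring]
  rw [show (∑ i ∈ Finset.range (m₁ + 1), ∑ j ∈ Finset.range (m₂ + 1),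
        ((Nat.factorial (i + j + m₃) : ℝ) /
          (Nat.factorial i * Nat.factorial j * Nat.factorial m₃)) *
          x ^ j * y ^ i * z ^ (i + j))
      = ∑ j ∈ range (m₁+1), ∑ k ∈ range (m₂+1), Nr m₃ j k * (y*z)^j * (z*x)^k from
    Finset.sum_congr rfl fun j _ => Finset.sum_congr rfl fun k _ => by
      rw [show j + k + m₃ = m₃ + j + k by omega]
      unfold Nr; ring]
  linarith [key]
end

section
/- Let m, r, k, ℓ be positive integers with m - r + k - ℓ = 0 and k > ℓ (equivalently r > m). Then for all real x, (1-x)^(r+1) Σ_{i=0}^{k} C(m+i, r) x^(i+m-r) + x^(ℓ+1) Σ_{i=0}^{m} C(k+i, ℓ) (1-x)^(i+k-ℓ) = 1 - Σ_{i=0}^{k-ℓ-1} C(k, i) (1-x)^i x^(k-i). -/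
open Finset

private lemma sum_range_add' {β : Type*} [AddCommMonoid β] (f : ℕ → β) (a b : ℕ) :
    ∑ i ∈ range (a + b), f i = (∑ i ∈ range a, f i) + ∑ i ∈ range b, f (a + i) := by
  induction b with
  | zero => simp
  | succ n ih =>
      rw [Nat.add_succ, sum_range_succ, ih, sum_range_succ, add_assoc]

private lemma helper (M : ℕ) (y : ℝ) : ∀ n : ℕ,
    (1 - y) * ∑ j ∈ range (n + 1), (Nat.choose (M + 1 + j) j : ℝ) * y ^ j
      + (Nat.choose (M + n + 2) (n + 1) : ℝ) * y ^ (n + 1)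
    = ∑ j ∈ range (n + 2), (Nat.choose (M + j) j : ℝ) * y ^ j := by
  intro n
  induction n with
  | zero =>
      simp [sum_range_succ, Nat.choose_one_right]
      push_cast
      ring
  | succ n ih =>
      have hps : (Nat.choose (M + (n+1) + 2) (n + 2) : ℝ)
          = (Nat.choose (M + n + 2) (n + 1) : ℝ) + (Nat.choose (M + n + 2) (n + 2) : ℝ) := by
        rw [show M + (n+1) + 2 = (M + n + 2) + 1 by omega]
        push_cast [Nat.choose_succ_succ]
        ring
      rw [show n + 1 + 1 = n + 2 from rfl] at *
      rw [sum_range_succ (fun j => (Nat.choose (M + 1 + j) j : ℝ) * y ^ j) (n+1),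
        sum_range_succ (fun j => (Nat.choose (M + j) j : ℝ) * y ^ j) (n+2),
        sum_range_succ (fun j => (Nat.choose (M + j) j : ℝ) * y ^ j) (n+1)] at *
      rw [show M + 1 + (n+1) = M + n + 2 by omega, show M + (n+2) = M + n + 2 by omega] at *
      rw [show M + (n+1) + 2 = M + n + 3 by omega] at *
      rw [show M + n + 3 = M + n + 2 + 1 by omega] at *
      push_cast [Nat.choose_succ_succ] at *
      linear_combination ih

private lemma tail (x y : ℝ) (h : x + y = 1) : ∀ (n M : ℕ),
    ∑ i ∈ range (n + 1), (Nat.choose (M + n + 1) i : ℝ) * y ^ i * x ^ (M + n + 1 - i)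
    = x ^ (M + 1) * ∑ j ∈ range (n + 1), (Nat.choose (M + j) j : ℝ) * y ^ j := by
  have hx : x = 1 - y := by linarith
  subst hx
  intro n
  induction n with
  | zero => intro M; simp
  | succ n ih =>
      intro M
      rw [sum_range_succ]
      rw [show M + (n+1) + 1 - (n+1) = M + 1 by omega]
      have hre : ∑ i ∈ range (n+1),
            (Nat.choose (M + (n+1) + 1) i : ℝ) * y ^ i * (1-y) ^ (M + (n+1) + 1 - i)
          = ∑ i ∈ range (n+1),
            (Nat.choose ((M+1) + n + 1) i : ℝ) * y ^ i * (1-y) ^ ((M+1) + n + 1 - i) := by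
        apply sum_congr rfl
        intro i hi
        rw [show M + (n+1) + 1 = (M+1) + n + 1 by omega]
      rw [hre, ih (M+1)]
      have hh := helper M y n
      have hc : (Nat.choose (M + (n+1) + 1) (n+1) : ℝ) = (Nat.choose (M + n + 2) (n+1) : ℝ) := by
        norm_num [show M + (n+1) + 1 = M + n + 2 by omega]
      rw [hc]
      rw [sum_range_succ (fun j => (Nat.choose (M + j) j : ℝ) * y ^ j) (n+1)] at hh ⊢
      calc (1-y) ^ (M + 1 + 1) * ∑ j ∈ range (n + 1), (Nat.choose (M + 1 + j) j : ℝ) * y ^ j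
            + (Nat.choose (M + n + 2) (n+1) : ℝ) * y ^ (n+1) * (1-y) ^ (M+1)
          = (1-y) ^ (M+1) * ((1-y) * (∑ j ∈ range (n + 1), (Nat.choose (M + 1 + j) j : ℝ) * y ^ j)
              + (Nat.choose (M + n + 2) (n+1) : ℝ) * y ^ (n+1)) := by ring
        _ = _ := by rw [hh]

private lemma CB (y : ℝ) (r l : ℕ) :
    (1-y)^(r+1) * ∑ j ∈ range (l+1), (Nat.choose (r+j) j : ℝ) * y^j
      + y^(l+1) * ∑ j ∈ range (r+1), (Nat.choose (l+j) j : ℝ) * (1-y)^j = 1 := by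
  have hbin : (1:ℝ) = ∑ i ∈ range (r+l+1+1),
      y ^ i * (1-y) ^ (r+l+1-i) * (Nat.choose (r+l+1) i : ℝ) := by
    have := add_pow (R := ℝ) y (1-y) (r+l+1)
    simp only [show y + (1-y) = 1 by ring, one_pow] at this
    exact this
  rw [show r+l+1+1 = (l+1) + (r+1) by omega, sum_range_add'] at hbin
  have h1 : ∑ i ∈ range (l+1), y ^ i * (1-y) ^ (r+l+1-i) * (Nat.choose (r+l+1) i : ℝ)
      = ∑ i ∈ range (l+1), (Nat.choose (r+l+1) i : ℝ) * y ^ i * (1-y) ^ (r+l+1-i) := by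
    apply sum_congr rfl; intro i _; ring
  have h2 : ∑ i ∈ range (r+1),
        y ^ (l+1+i) * (1-y) ^ (r+l+1-(l+1+i)) * (Nat.choose (r+l+1) (l+1+i) : ℝ)
      = ∑ i ∈ range (r+1), (Nat.choose (l+r+1) i : ℝ) * (1-y) ^ i * y ^ (l+r+1-i) := by
    rw [← sum_range_reflect (fun i => (Nat.choose (l+r+1) i : ℝ) * (1-y) ^ i * y ^ (l+r+1-i)) (r+1)]
    apply sum_congr rfl
    intro i hi
    simp only [mem_range] at hi
    rw [show r + 1 - 1 - i = r - i by omega,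
        show r+l+1-(l+1+i) = r - i by omega,
        show l+r+1-(r-i) = l+1+i by omega,
        show (Nat.choose (r+l+1) (l+1+i)) = (Nat.choose (l+r+1) (l+1+i)) by rw [Nat.add_comm r l],
        show l+1+i = (l+r+1) - (r-i) by omega,
        Nat.choose_symm (by omega)]
    ring
  rw [h1, h2] at hbin
  have t1 := tail (1-y) y (by ring) l r
  have t2 := tail y (1-y) (by ring) r l
  rw [t1, t2] at hbin
  linarith [hbin]

theorem three_param_case_k_gt_l (m r k ℓ : ℕ) (hm : 0 < m) (hr : 0 < r) (hk : 0 < k)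
    (hℓ : 0 < ℓ) (hsum : m + k = r + ℓ) (hkl : ℓ < k) (x : ℝ) :
    (1 - x) ^ (r + 1) * ∑ i ∈ Finset.range (k + 1), (Nat.choose (m + i) r : ℝ) * x ^ (i + m - r)
    + x ^ (ℓ + 1) * ∑ i ∈ Finset.range (m + 1), (Nat.choose (k + i) ℓ : ℝ) * (1 - x) ^ (i + k - ℓ)
    = 1 - ∑ i ∈ Finset.range (k - ℓ), (Nat.choose k i : ℝ) * (1 - x) ^ i * x ^ (k - i) := by
  obtain ⟨e, rfl⟩ : ∃ e, k = ℓ + e + 1 := ⟨k - ℓ - 1, by omega⟩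
  have hr2 : r = m + e + 1 := by omega
  subst hr2
  rw [show ℓ + e + 1 - ℓ = e + 1 by omega]
  -- first sum
  have e1 : ∑ i ∈ range (ℓ + e + 1 + 1), (Nat.choose (m + i) (m + e + 1) : ℝ) * x ^ (i + m - (m + e + 1))
      = ∑ j ∈ range (ℓ + 1), (Nat.choose (m + e + 1 + j) j : ℝ) * x ^ j := by
    rw [show ℓ + e + 1 + 1 = (e + 1) + (ℓ + 1) by omega, sum_range_add']
    have hz : ∑ i ∈ range (e + 1), (Nat.choose (m + i) (m + e + 1) : ℝ) * x ^ (i + m - (m + e + 1))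
        = 0 := by
      apply sum_eq_zero
      intro i hi
      simp only [mem_range] at hi
      rw [Nat.choose_eq_zero_of_lt (by omega)]
      simp
    rw [hz, zero_add]
    apply sum_congr rfl
    intro j hj
    rw [show m + (e + 1 + j) = (m + e + 1) + j by omega,
        show e + 1 + j + m - (m + e + 1) = j by omega,
        Nat.choose_symm_add]
  rw [e1]
  -- second sum
  have e2 : ∑ i ∈ range (m + 1), (Nat.choose (ℓ + e + 1 + i) ℓ : ℝ) * (1 - x) ^ (i + (ℓ + e + 1) - ℓ)
      = (∑ j ∈ range (m + e + 1 + 1), (Nat.choose (ℓ + j) j : ℝ) * (1 - x) ^ j)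
        - ∑ j ∈ range (e + 1), (Nat.choose (ℓ + j) j : ℝ) * (1 - x) ^ j := by
    rw [show m + e + 1 + 1 = (e + 1) + (m + 1) by omega,
        sum_range_add' (fun j => (Nat.choose (ℓ + j) j : ℝ) * (1 - x) ^ j) (e + 1) (m + 1)]
    have : ∑ i ∈ range (m + 1), (Nat.choose (ℓ + (e + 1 + i)) (e + 1 + i) : ℝ) * (1 - x) ^ (e + 1 + i)
        = ∑ i ∈ range (m + 1), (Nat.choose (ℓ + e + 1 + i) ℓ : ℝ) * (1 - x) ^ (i + (ℓ + e + 1) - ℓ) := by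
      apply sum_congr rfl
      intro i hi
      rw [show ℓ + (e + 1 + i) = ℓ + (e + 1 + i) from rfl,
          show e + 1 + i = (i + (ℓ + e + 1)) - ℓ by omega]
      rw [show ℓ + (i + (ℓ + e + 1) - ℓ) = ℓ + e + 1 + i by omega]
      rw [show (Nat.choose (ℓ + e + 1 + i) (i + (ℓ + e + 1) - ℓ)) = (Nat.choose (ℓ + e + 1 + i) ℓ) by
        rw [show ℓ + e + 1 + i = ℓ + (i + (ℓ + e + 1) - ℓ) by omega, Nat.choose_symm_add]]
    rw [this]
    ring
  rw [e2]
  -- RHS tail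
  have e3 : ∑ i ∈ range (e + 1), (Nat.choose (ℓ + e + 1) i : ℝ) * (1 - x) ^ i * x ^ (ℓ + e + 1 - i)
      = x ^ (ℓ + 1) * ∑ j ∈ range (e + 1), (Nat.choose (ℓ + j) j : ℝ) * (1 - x) ^ j :=
    tail x (1 - x) (by ring) e ℓ
  rw [e3]
  have hCB := CB x (m + e + 1) ℓ
  linear_combination hCB
end

section
/- For all integers m, k ≥ 0 and all real x, the polynomial identity x^(k+1) Σ_{i=0}^{m} C(k+i, k) (1-x)^i = 1 - (1-x)^(m+1) Σ_{i=0}^{k} C(m+i, m) x^i holds; in particular, the polynomial 1 - x^(k+1) Σ_{i=0}^{m} C(k+i, k) (1-x)^i is divisible by (1-x)^(m+1). -/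
private lemma cb_aux (m k : ℕ) (x : ℝ) :
    ∑ i ∈ Finset.range (k + 1), (Nat.choose (m + i) m : ℝ) * x ^ i
      = (1 - x) * ∑ i ∈ Finset.range (k + 1), (Nat.choose (m + 1 + i) (m + 1) : ℝ) * x ^ i
        + (Nat.choose (m + k + 1) k : ℝ) * x ^ (k + 1) := by
  induction k with
  | zero => simp
  | succ k ih =>
    rw [Finset.sum_range_succ (fun i => ((Nat.choose (m + i) m : ℝ)) * x ^ i) (k+1),
        Finset.sum_range_succ (fun i => ((Nat.choose (m + 1 + i) (m+1) : ℝ)) * x ^ i) (k+1), ih]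
    have e1 : Nat.choose (m + 1 + (k + 1)) (m + 1)
        = Nat.choose (m + (k + 1)) m + Nat.choose (m + k + 1) k := by
      have h1 : Nat.choose (m + k + 1 + 1) (m + 1)
          = Nat.choose (m + k + 1) m + Nat.choose (m + k + 1) (m + 1) :=
        Nat.choose_succ_succ _ _
      have h2 : Nat.choose (m + k + 1) (m + 1) = Nat.choose (m + k + 1) k := by
        have := Nat.choose_symm (n := m + k + 1) (k := m + 1) (by omega)
        simpa [Nat.add_sub_cancel, show m + k + 1 - (m + 1) = k by omega] using this.symm
      have : m + 1 + (k + 1) = m + k + 1 + 1 := by ring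
      rw [this, h1, h2, show m + (k + 1) = m + k + 1 by ring]
    have e2 : Nat.choose (m + (k + 1) + 1) (k + 1) = Nat.choose (m + 1 + (k + 1)) (m + 1) := by
      have := Nat.choose_symm (n := m + (k + 1) + 1) (k := k + 1) (by omega)
      rw [show m + (k+1) + 1 - (k+1) = m + 1 by omega] at this
      rw [← this, show m + 1 + (k + 1) = m + (k + 1) + 1 by ring]
    rw [e2, e1]
    push_cast
    ring

private lemma cb_id (m k : ℕ) (x : ℝ) :
    x ^ (k + 1) * ∑ i ∈ Finset.range (m + 1), (Nat.choose (k + i) k : ℝ) * (1 - x) ^ i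
      = 1 - (1 - x) ^ (m + 1) * ∑ i ∈ Finset.range (k + 1), (Nat.choose (m + i) m : ℝ) * x ^ i := by
  induction m with
  | zero =>
    have hg := geom_sum_mul x (k + 1)
    simp only [zero_add, Nat.choose_zero_right, Nat.cast_one, one_mul, Finset.sum_range_one,
      Nat.choose_self, pow_zero, mul_one, pow_one, Nat.add_zero]
    linear_combination (-1 : ℝ) * hg
  | succ m ih =>
    rw [Finset.sum_range_succ, mul_add, ih, cb_aux m k x,
        show k + (m + 1) = m + k + 1 by ring]
    ring

theorem chaundy_bullard_divisibility (m k : ℕ) :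
    (∀ x : ℝ, x ^ (k + 1) * ∑ i ∈ Finset.range (m + 1), (Nat.choose (k + i) k : ℝ) * (1 - x) ^ i
        = 1 - (1 - x) ^ (m + 1) * ∑ i ∈ Finset.range (k + 1), (Nat.choose (m + i) m : ℝ) * x ^ i)
    ∧ (1 - Polynomial.X : Polynomial ℝ) ^ (m + 1) ∣
        (1 - Polynomial.X ^ (k + 1) *
          ∑ i ∈ Finset.range (m + 1),
            (Nat.choose (k + i) k : Polynomial ℝ) * (1 - Polynomial.X) ^ i) := by
  constructor
  · exact fun x => cb_id m k x
  · refine ⟨∑ i ∈ Finset.range (k + 1), (Nat.choose (m + i) m : Polynomial ℝ) * Polynomial.X ^ i,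
      ?_⟩
    apply Polynomial.funext
    intro x
    simp only [Polynomial.eval_sub, Polynomial.eval_one, Polynomial.eval_mul, Polynomial.eval_pow,
      Polynomial.eval_X, Polynomial.eval_finset_sum, Polynomial.eval_natCast]
    linear_combination (-1 : ℝ) * cb_id m k x
end

section
/- For all positive integers n, nonnegative integers m₁, ..., mₙ, and nonzero real x₁, ..., xₙ with S := Σ_{t} ∏_{j≠t} x_j ≠ 0: x₁^(m₁+1) ⋯ xₙ^(mₙ+1) = Σ_{t=1}^{n} Σ_{0 ≤ i_j ≤ m_j, j ≠ t} [((Σ_{j≠t} i_j) + m_t)! / (m_t! ∏_{j≠t} i_j!)] · (∏_{j≠t} x_j^(m_j - i_j + 1)) · (P/S)^((Σ_{j≠t} i_j) + m_t + 1), where P = x₁⋯xₙ. -/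
/-!
Put `u = P / S` and `y j = u / x j`, so that `∑ j, y j = 1`. After division by
`∏ j, x j ^ (m j + 1)` the identity becomes
`∑ t, ∑ k ≤ m with k t = m t, multinomial k * y ^ k * y t = 1`.
The `(t, k)` term is the probability that, drawing letters independently with law `y`,
letter `t` is the first one to be drawn `m t + 1` times, each other letter `j` having been
drawn `k j` times by then. Conditioning on the first draw, i.e. Pascal's recurrence for
multinomial coefficients, writes the left side `F m` as `∑ j, y j * F (m - e j)` (with `1` in
place of `F (m - e j)` when `m j = 0`), so `F ≡ 1` by well-founded induction on `m`.
-/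

open Finset

lemma Nat.cast_multinomial {α K : Type*} [Semifield K] [CharZero K] (s : Finset α) (f : α → ℕ) :
    (Nat.multinomial s f : K) = (∑ i ∈ s, f i).factorial / ∏ i ∈ s, ((f i).factorial : K) := by
  rw [eq_div_iff (prod_ne_zero_iff.mpr fun i _ => Nat.cast_ne_zero.mpr (f i).factorial_ne_zero),
    mul_comm]
  exact_mod_cast Nat.multinomial_spec s f

section FirstOverflow

variable {ι : Type*} [DecidableEq ι]

lemma sub_single_one_eq_update (k : ι → ℕ) (j : ι) :
    k - Pi.single j 1 = Function.update k j (k j - 1) := by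
  ext l
  rcases eq_or_ne l j with rfl | hl <;> simp [*]

variable [Fintype ι]

@[to_additive]
lemma prod_apply_update {M : Type*} [CommMonoid M] (f : ι → ℕ → M) (k : ι → ℕ) (j : ι) (a : ℕ) :
    ∏ l, f l (Function.update k j a l) = f j a * ∏ l ∈ univ.erase j, f l (k l) := by
  rw [← mul_prod_erase univ _ (mem_univ j), Function.update_self]
  congr 1
  exact prod_congr rfl fun l hl => by rw [Function.update_of_ne (ne_of_mem_erase hl)]

lemma sum_sub_single_add_one (k : ι → ℕ) {j : ι} (hj : k j ≠ 0) :
    ∑ l, (k - Pi.single j 1 : ι → ℕ) l + 1 = ∑ l, k l := by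
  rw [sub_single_one_eq_update, sum_apply_update (fun _ a => a), ← add_sum_erase _ _ (mem_univ j)]
  omega

lemma prod_factorial_eq_mul_prod_factorial_sub_single (k : ι → ℕ) {j : ι} (hj : k j ≠ 0) :
    ∏ l, (k l).factorial = k j * ∏ l, ((k - Pi.single j 1 : ι → ℕ) l).factorial := by
  rw [sub_single_one_eq_update, prod_apply_update (fun _ a => a.factorial), ← mul_assoc,
    Nat.mul_factorial_pred hj, mul_prod_erase univ (fun l => (k l).factorial) (mem_univ j)]

lemma prod_pow_eq_mul_prod_pow_sub_single {R : Type*} [CommMonoid R] (y : ι → R) (k : ι → ℕ)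
    {j : ι} (hj : k j ≠ 0) : ∏ l, y l ^ k l = y j * ∏ l, y l ^ (k - Pi.single j 1 : ι → ℕ) l := by
  rw [sub_single_one_eq_update, prod_apply_update (fun l a => y l ^ a), ← mul_assoc,
    mul_pow_sub_one hj, mul_prod_erase univ (fun l => y l ^ k l) (mem_univ j)]

lemma Nat.multinomial_univ_eq_sum_sub_single (k : ι → ℕ) (hk : k ≠ 0) :
    Nat.multinomial univ k = ∑ j with k j ≠ 0, Nat.multinomial univ (k - Pi.single j 1) := by
  have hsum : ∑ l, k l ≠ 0 := fun h => hk (funext fun l => sum_eq_zero_iff.mp h l (mem_univ l))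
  have hpos : 0 < ∏ l, (k l).factorial := prod_pos fun l _ => (k l).factorial_pos
  refine Nat.eq_of_mul_eq_mul_left hpos ?_
  calc (∏ l, (k l).factorial) * Nat.multinomial univ k
      = (∑ l, k l) * (∑ l, k l - 1).factorial := by
        rw [Nat.multinomial_spec, Nat.mul_factorial_pred hsum]
    _ = ∑ j with k j ≠ 0, k j * (∑ l, k l - 1).factorial := by
        rw [← sum_mul, sum_filter_ne_zero]
    _ = ∑ j with k j ≠ 0, (∏ l, (k l).factorial) * Nat.multinomial univ (k - Pi.single j 1) := by
        refine sum_congr rfl fun j hj => ?_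
        have hj := (mem_filter.mp hj).2
        rw [prod_factorial_eq_mul_prod_factorial_sub_single k hj, mul_assoc, Nat.multinomial_spec,
          ← sum_sub_single_add_one k hj, Nat.add_sub_cancel]
    _ = _ := (mul_sum ..).symm

def overflowBox (m : ι → ℕ) (t : ι) : Finset (ι → ℕ) := {k ∈ Iic m | k t = m t}

@[simp]
lemma mem_overflowBox {m k : ι → ℕ} {t : ι} : k ∈ overflowBox m t ↔ k ≤ m ∧ k t = m t := by
  simp [overflowBox]

lemma overflowBox_filter_ne_zero {m : ι → ℕ} {j : ι} (hj : m j ≠ 0) (t : ι) :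
    {k ∈ overflowBox m t | k j ≠ 0} =
      (overflowBox (m - Pi.single j 1) t).map (addRightEmbedding (Pi.single j 1)) := by
  ext k
  simp only [mem_filter, mem_map, mem_overflowBox, addRightEmbedding_apply, Pi.le_def]
  constructor
  · rintro ⟨⟨hkm, hkt⟩, hkj⟩
    refine ⟨k - Pi.single j 1, ⟨fun l => ?_, by simp [hkt]⟩, funext fun l => ?_⟩ <;>
    · have := hkm l
      simp only [Pi.sub_apply, Pi.add_apply, Pi.single_apply]
      split_ifs <;> subst_vars <;> omega
  · rintro ⟨k, ⟨hkm, hkt⟩, rfl⟩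
    refine ⟨⟨fun l => ?_, ?_⟩, by simp⟩
    · have := hkm l
      simp only [Pi.sub_apply, Pi.add_apply, Pi.single_apply] at this ⊢
      split_ifs at this ⊢ <;> subst_vars <;> omega
    · simp only [Pi.sub_apply, Pi.add_apply, Pi.single_apply] at hkt ⊢
      split_ifs at hkt ⊢ <;> subst_vars <;> omega

lemma sum_overflowBox_sub_single {M : Type*} [AddCommMonoid M] (g : (ι → ℕ) → M) (m : ι → ℕ)
    (t j : ι) :
    ∑ k ∈ overflowBox m t, (if k j ≠ 0 then g (k - Pi.single j 1) else 0) =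
      if m j = 0 then 0 else ∑ k ∈ overflowBox (m - Pi.single j 1) t, g k := by
  split_ifs with hj
  · refine sum_eq_zero fun k hk => if_neg ?_
    have : k j ≤ m j := (mem_overflowBox.mp hk).1 j
    omega
  · rw [← sum_filter, overflowBox_filter_ne_zero hj, sum_map]
    simp only [addRightEmbedding_apply, add_tsub_cancel_right]

variable {R : Type*} [CommSemiring R]

def firstOverflowSum (y : ι → R) (m : ι → ℕ) : R :=
  ∑ t, ∑ k ∈ overflowBox m t, Nat.multinomial univ k * ((∏ j, y j ^ k j) * y t)

lemma multinomial_mul_prod_pow_eq_sum_sub_single (y : ι → R) (k : ι → ℕ) :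
    (Nat.multinomial univ k : R) * ∏ j, y j ^ k j =
      (if k = 0 then 1 else 0) + ∑ j, if k j ≠ 0 then
        y j * ((Nat.multinomial univ (k - Pi.single j 1) : R) *
          ∏ l, y l ^ (k - Pi.single j 1 : ι → ℕ) l) else 0 := by
  by_cases hk : k = 0
  · subst hk
    simp [Nat.multinomial]
  rw [if_neg hk, zero_add, ← sum_filter, Nat.multinomial_univ_eq_sum_sub_single k hk,
    Nat.cast_sum, sum_mul]
  refine sum_congr rfl fun j hj => ?_
  rw [prod_pow_eq_mul_prod_pow_sub_single y k (mem_filter.mp hj).2]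
  ring

lemma firstOverflowSum_eq (y : ι → R) (m : ι → ℕ) :
    firstOverflowSum y m =
      ∑ j, y j * if m j = 0 then 1 else firstOverflowSum y (m - Pi.single j 1) := by
  have hzero (t : ι) : ∑ k ∈ overflowBox m t, (if k = 0 then y t else 0) =
      if m t = 0 then y t else 0 := by
    simp [sum_ite_eq', eq_comm]
  calc firstOverflowSum y m
      = ∑ t, ∑ k ∈ overflowBox m t, ((if k = 0 then y t else 0) + ∑ j, if k j ≠ 0 then
          y j * ((Nat.multinomial univ (k - Pi.single j 1) : R) *
            ((∏ l, y l ^ (k - Pi.single j 1 : ι → ℕ) l) * y t)) else 0) := by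
        refine sum_congr rfl fun t _ => sum_congr rfl fun k _ => ?_
        rw [← mul_assoc, multinomial_mul_prod_pow_eq_sum_sub_single, add_mul, sum_mul]
        simp only [ite_mul, one_mul, zero_mul, mul_assoc]
    _ = ∑ j, ((if m j = 0 then y j else 0) +
          if m j = 0 then 0 else y j * firstOverflowSum y (m - Pi.single j 1)) := by
        simp only [sum_add_distrib, hzero]
        congr 1
        rw [sum_congr rfl fun t _ => sum_comm, sum_comm]
        refine sum_congr rfl fun j _ => ?_
        rw [sum_congr rfl fun t _ => sum_overflowBox_sub_single
          (fun k => y j * ((Nat.multinomial univ k : R) * ((∏ l, y l ^ k l) * y t))) m t j]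
        split_ifs
        · exact sum_const_zero
        · simp only [firstOverflowSum, mul_sum]
    _ = _ := by
        refine sum_congr rfl fun j _ => ?_
        split_ifs <;> simp

lemma firstOverflowSum_eq_one {y : ι → R} (hy : ∑ j, y j = 1) (m : ι → ℕ) :
    firstOverflowSum y m = 1 := by
  induction m using WellFoundedLT.induction with
  | ind m ih =>
    rw [firstOverflowSum_eq]
    conv_rhs => rw [← hy]
    refine sum_congr rfl fun j _ => ?_
    split_ifs with hj
    · exact mul_one _
    · have hlt : m - Pi.single j 1 < m :=
        Pi.lt_def.mpr ⟨tsub_le_self, j, by simp only [Pi.sub_apply, Pi.single_eq_same]; omega⟩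
      rw [ih _ hlt, mul_one]

lemma update_mem_overflowBox {m i : ι → ℕ} {t : ι}
    (hi : i ∈ Fintype.piFinset (fun j => range (if j = t then 1 else m j + 1))) :
    Function.update i t (m t) ∈ overflowBox m t := by
  simp only [Fintype.mem_piFinset, mem_range] at hi
  refine mem_overflowBox.mpr ⟨fun j => ?_, by simp⟩
  have := hi j
  rcases eq_or_ne j t with rfl | hj <;> simp_all

lemma sum_overflowBox_eq_sum_piFinset {M : Type*} [AddCommMonoid M] (g : (ι → ℕ) → M)
    (m : ι → ℕ) (t : ι) :
    ∑ k ∈ overflowBox m t, g k =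
      ∑ i ∈ Fintype.piFinset (fun j => range (if j = t then 1 else m j + 1)),
        g (Function.update i t (m t)) := by
  have hinv {k : ι → ℕ} (hk : k ∈ overflowBox m t) :
      Function.update (Function.update k t 0) t (m t) = k := by
    rw [Function.update_idem, Function.update_eq_self_iff, (mem_overflowBox.mp hk).2]
  refine sum_nbij' (fun k => Function.update k t 0) (fun i => Function.update i t (m t))
    (fun k hk => ?_) (fun i hi => update_mem_overflowBox hi) (fun k hk => hinv hk)
    (fun i hi => ?_)
    fun k hk => by rw [hinv hk]
  · simp only [Fintype.mem_piFinset, mem_range]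
    intro j
    have : k j ≤ m j := (mem_overflowBox.mp hk).1 j
    rcases eq_or_ne j t with rfl | hj <;> simp [*]
  · simp only [Fintype.mem_piFinset, mem_range] at hi
    have hit : i t = 0 := by simpa using hi t
    rw [Function.update_idem, Function.update_eq_self_iff, hit]

end FirstOverflow

section Homogenization

variable {ι K : Type*} [Fintype ι] [Field K] {x : ι → K}

lemma mul_prod_pow_mul_prod_div_pow (hx : ∀ j, x j ≠ 0) (u : K) {m k : ι → ℕ} (hkm : k ≤ m)
    (t : ι) :
    x t * ((∏ j, x j ^ (m j + 1)) * ((∏ j, (u / x j) ^ k j) * (u / x t))) =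
      (∏ j, x j ^ (m j - k j + 1)) * u ^ (∑ j, k j + 1) := by
  have hsplit : ∏ j, x j ^ (m j + 1) = (∏ j, x j ^ (m j - k j + 1)) * ∏ j, x j ^ k j := by
    rw [← prod_mul_distrib]
    refine prod_congr rfl fun j _ => ?_
    rw [← pow_add]
    have : k j ≤ m j := hkm j
    congr 1
    omega
  have hne : ∏ j, x j ^ k j ≠ 0 := prod_ne_zero_iff.mpr fun j _ => pow_ne_zero _ (hx j)
  simp_rw [div_pow, prod_div_distrib, prod_pow_eq_pow_sum, hsplit, pow_succ]
  field_simp [hx t]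

variable [DecidableEq ι]

lemma sum_prod_div_div_eq_one (hx : ∀ j, x j ≠ 0) (hs : ∑ t, ∏ l ∈ univ.erase t, x l ≠ 0) :
    ∑ j, (∏ l, x l) / (∑ t, ∏ l ∈ univ.erase t, x l) / x j = 1 := by
  have hdiv (j : ι) : (∏ l, x l) / x j = ∏ l ∈ univ.erase j, x l :=
    div_eq_of_eq_mul (hx j) (prod_erase_mul univ x (mem_univ j)).symm
  simp_rw [div_right_comm _ _ (x _), hdiv, ← sum_div, div_self hs]

lemma prod_pow_mul_multinomial_eq [CharZero K] (hx : ∀ j, x j ≠ 0) (u : K) {m i : ι → ℕ} {t : ι}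
    (hi : i ∈ Fintype.piFinset (fun j => range (if j = t then 1 else m j + 1))) :
    (∏ j, x j ^ (m j + 1)) * ((Nat.multinomial univ (Function.update i t (m t)) : K) *
      ((∏ j, (u / x j) ^ Function.update i t (m t) j) * (u / x t))) =
    ((∑ j ∈ univ.erase t, i j + m t).factorial : K) /
        ((m t).factorial * ((∏ j ∈ univ.erase t, (i j).factorial : ℕ) : K)) *
      (∏ j ∈ univ.erase t, x j ^ (m j - i j + 1)) * u ^ (∑ j ∈ univ.erase t, i j + m t + 1) := by
  set k := Function.update i t (m t)
  have hkm : k ≤ m := (mem_overflowBox.mp (update_mem_overflowBox hi)).1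
  have hsum : ∑ j, k j = ∑ j ∈ univ.erase t, i j + m t := by
    rw [sum_apply_update (fun _ a => a), add_comm]
  have hfac : ∏ j, ((k j).factorial : K) =
      (m t).factorial * ∏ j ∈ univ.erase t, ((i j).factorial : K) :=
    prod_apply_update (fun _ a => (a.factorial : K)) i t (m t)
  have hpow : ∏ j, x j ^ (m j - k j + 1) = x t * ∏ j ∈ univ.erase t, x j ^ (m j - i j + 1) := by
    rw [prod_apply_update (fun j a => x j ^ (m j - a + 1)), Nat.sub_self, zero_add, pow_one]
  rw [← mul_right_inj' (hx t)]
  calc x t * ((∏ j, x j ^ (m j + 1)) * ((Nat.multinomial univ k : K) *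
        ((∏ j, (u / x j) ^ k j) * (u / x t))))
      = Nat.multinomial univ k * (x t * ((∏ j, x j ^ (m j + 1)) *
          ((∏ j, (u / x j) ^ k j) * (u / x t)))) := by ring
    _ = Nat.multinomial univ k * ((∏ j, x j ^ (m j - k j + 1)) * u ^ (∑ j, k j + 1)) := by
        rw [mul_prod_pow_mul_prod_div_pow hx u hkm]
    _ = _ := by
        rw [Nat.cast_multinomial, hsum, hfac, hpow, Nat.cast_prod]
        ring

end Homogenization

theorem n_var_homogeneous_general (n : ℕ) (m : Fin n → ℕ) (x : Fin n → ℝ)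
    (hx : ∀ t, x t ≠ 0)
    (hs : (∑ t, ∏ j ∈ Finset.univ.erase t, x j) ≠ 0) :
    ∏ j, x j ^ (m j + 1)
      = ∑ t, ∑ i ∈ Fintype.piFinset (fun j => Finset.range (if j = t then 1 else m j + 1)),
          ((Nat.factorial ((∑ j ∈ Finset.univ.erase t, i j) + m t) : ℝ) /
            (Nat.factorial (m t) * ∏ j ∈ Finset.univ.erase t, Nat.factorial (i j))) *
          (∏ j ∈ Finset.univ.erase t, x j ^ (m j - i j + 1)) *
          ((∏ j, x j) / (∑ s, ∏ j ∈ Finset.univ.erase s, x j))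
            ^ ((∑ j ∈ Finset.univ.erase t, i j) + m t + 1) := by
  set u := (∏ j, x j) / ∑ s, ∏ j ∈ univ.erase s, x j
  calc ∏ j, x j ^ (m j + 1)
      = (∏ j, x j ^ (m j + 1)) * firstOverflowSum (fun j => u / x j) m := by
        rw [firstOverflowSum_eq_one (sum_prod_div_div_eq_one hx hs), mul_one]
    _ = _ := by
        rw [firstOverflowSum, mul_sum]
        refine sum_congr rfl fun t _ => ?_
        rw [sum_overflowBox_eq_sum_piFinset, mul_sum]
        exact sum_congr rfl fun i hi => prod_pow_mul_multinomial_eq hx u hi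

theorem n_var_homogeneous (n : ℕ) (hn : 0 < n) (m : Fin n → ℕ) (x : Fin n → ℝ)
    (hx : ∀ t, x t ≠ 0)
    (hs : (∑ t, ∏ j ∈ Finset.univ.erase t, x j) ≠ 0) :
    ∏ j, x j ^ (m j + 1)
      = ∑ t, ∑ i ∈ Fintype.piFinset (fun j => Finset.range (if j = t then 1 else m j + 1)),
          ((Nat.factorial ((∑ j ∈ Finset.univ.erase t, i j) + m t) : ℝ) /
            (Nat.factorial (m t) * ∏ j ∈ Finset.univ.erase t, Nat.factorial (i j))) *
          (∏ j ∈ Finset.univ.erase t, x j ^ (m j - i j + 1)) *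
          ((∏ j, x j) / (∑ s, ∏ j ∈ Finset.univ.erase s, x j))
            ^ ((∑ j ∈ Finset.univ.erase t, i j) + m t + 1) :=
  n_var_homogeneous_general n m x hx hs
end

section
/- For all integers k, m ≥ 0, the function f(x) = x^(k+1) Σ_{i=0}^{m} C(k+i, k) (1-x)^i satisfies f(x) + f(1-x) = 1 for all real x when m = k. -/
open Finset

lemma geom_helper (n : ℕ) (x : ℝ) :
    x ^ (n + 1) + (1 - x) * ∑ j ∈ range (n + 1), x ^ j = 1 := by
  induction n with
  | zero => simp
  | succ n ih =>
    rw [sum_range_succ]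
    linear_combination ih

lemma chaundy_bullard (k : ℕ) : ∀ (m : ℕ) (x : ℝ),
    x ^ (k + 1) * ∑ i ∈ range (m + 1), (Nat.choose (k + i) k : ℝ) * (1 - x) ^ i
    + (1 - x) ^ (m + 1) * ∑ j ∈ range (k + 1), (Nat.choose (m + j) m : ℝ) * x ^ j
    = 1 := by
  induction k with
  | zero =>
    intro m x
    simp only [Nat.zero_add, zero_add, Nat.choose_zero_right, Nat.cast_one, one_mul,
      sum_range_one, Nat.add_zero, add_zero, Nat.choose_self, pow_zero, mul_one]
    have := geom_helper m (1 - x)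
    simp only [sub_sub_cancel] at this
    linarith [this]
  | succ k ihk =>
    intro m
    induction m with
    | zero =>
      intro x
      simp only [zero_add, sum_range_one, Nat.add_zero, Nat.choose_self, Nat.cast_one,
        pow_zero, mul_one, one_mul, Nat.zero_add, Nat.choose_zero_right]
      have := geom_helper (k + 1) x
      linarith [this]
    | succ m ihm =>
      intro x
      have hA2 : ∑ i ∈ range (m + 1 + 1), (Nat.choose (k + i) (k + 1) : ℝ) * (1 - x) ^ i
          = (1 - x) * ∑ i ∈ range (m + 1), (Nat.choose (k + 1 + i) (k + 1) : ℝ) * (1 - x) ^ i := by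
        rw [sum_range_succ' (fun i => (Nat.choose (k + i) (k + 1) : ℝ) * (1 - x) ^ i) (m + 1)]
        simp only [Nat.add_zero, pow_zero, mul_one, Nat.choose_succ_self, Nat.cast_zero, add_zero]
        rw [mul_sum]
        apply sum_congr rfl
        intro i _
        rw [show k + (i + 1) = k + 1 + i by ring]
        ring
      have hA : ∑ i ∈ range (m + 1 + 1), (Nat.choose (k + 1 + i) (k + 1) : ℝ) * (1 - x) ^ i
          = (∑ i ∈ range (m + 1 + 1), (Nat.choose (k + i) k : ℝ) * (1 - x) ^ i)
            + (1 - x) * ∑ i ∈ range (m + 1), (Nat.choose (k + 1 + i) (k + 1) : ℝ) * (1 - x) ^ i := by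
        have h1 : ∀ i : ℕ, (Nat.choose (k + 1 + i) (k + 1) : ℝ)
            = (Nat.choose (k + i) k : ℝ) + (Nat.choose (k + i) (k + 1) : ℝ) := by
          intro i
          rw [show k + 1 + i = (k + i) + 1 by ring, Nat.choose_succ_succ]
          push_cast; ring
        simp_rw [h1, add_mul, sum_add_distrib, hA2]
        congr 2
        rw [← sum_add_distrib]
        exact sum_congr rfl fun i _ => by rw [h1]; ring
      have hB2 : ∑ j ∈ range (k + 1 + 1), (Nat.choose (m + j) (m + 1) : ℝ) * x ^ j
          = x * ∑ j ∈ range (k + 1), (Nat.choose (m + 1 + j) (m + 1) : ℝ) * x ^ j := by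
        rw [sum_range_succ' (fun j => (Nat.choose (m + j) (m + 1) : ℝ) * x ^ j) (k + 1)]
        simp only [Nat.add_zero, pow_zero, mul_one, Nat.choose_succ_self, Nat.cast_zero, add_zero]
        rw [mul_sum]
        apply sum_congr rfl
        intro j _
        rw [show m + (j + 1) = m + 1 + j by ring]
        ring
      have hB : ∑ j ∈ range (k + 1 + 1), (Nat.choose (m + 1 + j) (m + 1) : ℝ) * x ^ j
          = (∑ j ∈ range (k + 1 + 1), (Nat.choose (m + j) m : ℝ) * x ^ j)
            + x * ∑ j ∈ range (k + 1), (Nat.choose (m + 1 + j) (m + 1) : ℝ) * x ^ j := by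
        have h1 : ∀ j : ℕ, (Nat.choose (m + 1 + j) (m + 1) : ℝ)
            = (Nat.choose (m + j) m : ℝ) + (Nat.choose (m + j) (m + 1) : ℝ) := by
          intro j
          rw [show m + 1 + j = (m + j) + 1 by ring, Nat.choose_succ_succ]
          push_cast; ring
        simp_rw [h1, add_mul, sum_add_distrib, hB2]
        congr 2
        rw [← sum_add_distrib]
        exact sum_congr rfl fun j _ => by rw [h1]; ring
      have hout := ihk (m + 1) x
      have hin := ihm x
      rw [hA, hB]
      linear_combination x * hout + (1 - x) * hin

theorem daubechies_symmetry (k m : ℕ) (hkm : m = k) (x : ℝ) :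
    (fun y : ℝ => y ^ (k + 1) * ∑ i ∈ Finset.range (m + 1),
        (Nat.choose (k + i) k : ℝ) * (1 - y) ^ i) x
    + (fun y : ℝ => y ^ (k + 1) * ∑ i ∈ Finset.range (m + 1),
        (Nat.choose (k + i) k : ℝ) * (1 - y) ^ i) (1 - x)
    = 1 := by
  subst hkm
  simp only [sub_sub_cancel]
  exact chaundy_bullard m m x
end
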